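/- arXiv:math/9907099 — 2 statements merged into one kernel-verified Lean document; each statement's English description precedes it below -/
import Mathlib

section
/- Let r ∈ S∧S be skew-symmetric such that the coboundary cocommutator δ_r is a Lie bialgebra cocommutator. Then δ_r(D) = 0 if and only if r = c1 D∧M + c2 P∧K for some real c1, c2. Conversely, for any real c1, c2, the element r = c1 D∧M + c2 P∧K makes δ_r a Lie bialgebra cocommutator, with δ_r(D) = δ_r(M) = 0, δ_r(P) = (c1-c2) P∧M, δ_r(K) = -(c1+c2) K∧M, δ_r(H) = 2c1 H∧M, δ_r(C) = -2c1 C∧M. -/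
/-!
`D` acts diagonally on the basis `D, H, P, K, C, M` with weights `0, -2, -1, 1, 2, 0`, so
`δ_r(D) = D·r = 0` says that `r` has weight zero, and the skew-symmetric tensors of weight zero
are the combinations `a D∧M + b P∧K + c H∧C`. For such an `r` the co-Jacobi expression at `P`
has coefficient `-c²` on `H⊗D⊗K`, so `c = 0`.

Conversely, for `c = 0` the cocommutator sends `M` to `0` and every other basis vector `X`
into `ℝ X∧M`, so `(δ ⊗ id)(δ X)` is a multiple of `(X∧M)⊗M`, whose cyclic sum vanishes.
Being a coboundary, `δ_r` is automatically a skew-symmetric-valued cocycle.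
-/


open TensorProduct

noncomputable section

variable (L : Type) [LieRing L] [LieAlgebra ℝ L]

/-- The wedge X∧Y = X⊗Y - Y⊗X in S⊗S. -/
def wedge (X Y : L) : L ⊗[ℝ] L := X ⊗ₜ[ℝ] Y - Y ⊗ₜ[ℝ] X

/-- The adjoint action of X on S⊗S: X·r = (ad_X⊗id + id⊗ad_X)(r). -/
def act (X : L) : (L ⊗[ℝ] L) →ₗ[ℝ] (L ⊗[ℝ] L) :=
  LinearMap.rTensor L (LieAlgebra.ad ℝ L X) + LinearMap.lTensor L (LieAlgebra.ad ℝ L X)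

/-- S∧S: the span of wedges, i.e. the skew-symmetric part of S⊗S. -/
def skewPart : Submodule ℝ (L ⊗[ℝ] L) :=
  Submodule.span ℝ {w | ∃ X Y : L, w = wedge L X Y}

/-- 1-cocycle condition. -/
def IsCocycle (δ : L → L ⊗[ℝ] L) : Prop :=
  ∀ X Y : L, δ ⁅X, Y⁆ = act L X (δ Y) - act L Y (δ X)

/-- The coboundary cocommutator δ_r(X) = X·r, as a linear map. -/
def cobdry (r : L ⊗[ℝ] L) : L →ₗ[ℝ] L ⊗[ℝ] L where
  toFun X := act L X r
  map_add' X Y := by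
    have h : LieAlgebra.ad ℝ L (X + Y) = LieAlgebra.ad ℝ L X + LieAlgebra.ad ℝ L Y :=
      map_add _ _ _
    simp only [act, h, LinearMap.rTensor_add, LinearMap.lTensor_add, LinearMap.add_apply]
    abel
  map_smul' c X := by
    have h : LieAlgebra.ad ℝ L (c • X) = c • LieAlgebra.ad ℝ L X := map_smul _ _ _
    simp only [act, h, LinearMap.rTensor_smul, LinearMap.lTensor_smul, LinearMap.add_apply,
      LinearMap.smul_apply, RingHom.id_apply, smul_add]

/-- The cyclic permutation ζ : x⊗y⊗z ↦ z⊗x⊗y on (S⊗S)⊗S. -/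
def zeta : ((L ⊗[ℝ] L) ⊗[ℝ] L) →ₗ[ℝ] ((L ⊗[ℝ] L) ⊗[ℝ] L) :=
  ((TensorProduct.assoc ℝ L L L).symm.toLinearMap).comp
    ((TensorProduct.comm ℝ (L ⊗[ℝ] L) L).toLinearMap)

/-- The co-Jacobi identity for a linear map δ : S → S⊗S. -/
def CoJacobi (δ : L →ₗ[ℝ] L ⊗[ℝ] L) : Prop :=
  ∀ X : L,
    ((LinearMap.id : ((L ⊗[ℝ] L) ⊗[ℝ] L) →ₗ[ℝ] ((L ⊗[ℝ] L) ⊗[ℝ] L)) + zeta L +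
      zeta L ∘ₗ zeta L) (LinearMap.rTensor L δ (δ X)) = 0

/-- A Lie bialgebra cocommutator: skew-symmetric-valued 1-cocycle satisfying co-Jacobi. -/
def IsBialgCocomm (δ : L →ₗ[ℝ] L ⊗[ℝ] L) : Prop :=
  (∀ X : L, δ X ∈ skewPart L) ∧ IsCocycle L ⇑δ ∧ CoJacobi L δ

/-- The general 15-parameter skew-symmetric element r(a,b,c) of S⊗S. -/
def rGen (D H P K C M : L) (a1 a2 a3 a4 a5 a6 b1 b2 b3 b4 b5 b6 c1 c2 c3 : ℝ) :
    L ⊗[ℝ] L :=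
  a1 • wedge L D P + a2 • wedge L D H + a3 • wedge L P M + a4 • wedge L H M +
    a5 • wedge L P H + a6 • wedge L P C + b1 • wedge L D K + b2 • wedge L D C +
    b3 • wedge L K M + b4 • wedge L C M + b5 • wedge L K C + b6 • wedge L K H +
    c1 • wedge L D M + c2 • wedge L P K + c3 • wedge L H C

/-- The 19 Schrödinger bialgebra equations. -/
def Eqs19 (a1 a2 a3 a4 a5 a6 b1 b2 b3 b4 b5 b6 c1 c2 c3 : ℝ) : Prop :=
  a6^2 + a6*b1 - 3*a1*b5 + b5*b6 = 0 ∧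
  a2*a3 - 2*a1*a4 - a4*b6 - 3*a5*c1 + a5*c2 = 0 ∧
  a1*a2 + a2*b6 - a5*c3 = 0 ∧
  a5*b1 - a1*b6 - 2*a2*c1 - a4*c3 = 0 ∧
  a4*a6 + a4*b1 - a2*b3 - a5*b4 + a1*c1 - a1*c2 = 0 ∧
  3*a1*b2 - a2*b5 + a6*c3 + b1*c3 = 0 ∧
  a3*b2 + 2*a1*b4 - a4*b5 + a6*c1 + a6*c2 + b3*c3 = 0 ∧
  3*a2*b5 + b2*b6 - a6*c3 = 0 ∧
  b6^2 + b6*a1 - 3*b1*a5 + a5*a6 = 0 ∧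
  b2*b3 - 2*b1*b4 - b4*a6 - 3*b5*c1 - b5*c2 = 0 ∧
  b1*b2 + b2*a6 + b5*c3 = 0 ∧
  b5*a1 - b1*a6 - 2*b2*c1 + b4*c3 = 0 ∧
  b4*b6 + b4*a1 - b2*a3 - b5*a4 + b1*c1 + b1*c2 = 0 ∧
  3*b1*a2 - b2*a5 - b6*c3 - a1*c3 = 0 ∧
  b3*a2 + 2*b1*a4 - b4*a5 + b6*c1 - b6*c2 - a3*c3 = 0 ∧
  3*b2*a5 + a2*a6 + b6*c3 = 0 ∧
  4*a2*b2 + c3^2 = 0 ∧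
  2*a4*b2 + 2*a2*b4 + a5*b5 - a6*b6 = 0 ∧
  2*a1*b1 - a1*a6 - b1*b6 + a5*b5 - a6*b6 = 0

/-- Full antisymmetrization X∧Y∧Z in (S⊗S)⊗S. -/
def wedge3 (X Y Z : L) : (L ⊗[ℝ] L) ⊗[ℝ] L :=
  (X ⊗ₜ[ℝ] Y) ⊗ₜ[ℝ] Z - (X ⊗ₜ[ℝ] Z) ⊗ₜ[ℝ] Y - (Y ⊗ₜ[ℝ] X) ⊗ₜ[ℝ] Z +
    (Y ⊗ₜ[ℝ] Z) ⊗ₜ[ℝ] X + (Z ⊗ₜ[ℝ] X) ⊗ₜ[ℝ] Y - (Z ⊗ₜ[ℝ] Y) ⊗ₜ[ℝ] X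

/-- The Schouten bracket [[r,r]], written in coordinates w.r.t. a basis. -/
def schouten (B : Module.Basis (Fin 6) ℝ L) (r : L ⊗[ℝ] L) : (L ⊗[ℝ] L) ⊗[ℝ] L :=
  ∑ i : Fin 6, ∑ j : Fin 6, ∑ k : Fin 6, ∑ l : Fin 6,
    (((B.tensorProduct B).repr r (i, j)) * ((B.tensorProduct B).repr r (k, l))) •
      ((⁅B i, B k⁆ ⊗ₜ[ℝ] B j) ⊗ₜ[ℝ] B l + (B i ⊗ₜ[ℝ] ⁅B j, B k⁆) ⊗ₜ[ℝ] B l +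
        (B i ⊗ₜ[ℝ] B k) ⊗ₜ[ℝ] ⁅B j, B l⁆)

/-- The adjoint-invariant elements of S⊗S. -/
def invariants : Submodule ℝ (L ⊗[ℝ] L) where
  carrier := {η | ∀ X : L, act L X η = 0}
  add_mem' := by
    intro a b ha hb X
    simp [map_add, ha X, hb X]
  zero_mem' := by intro X; simp
  smul_mem' := by
    intro c a ha X
    simp [map_smul, ha X]

/-- The space of skew-symmetric-valued 1-cocycles on S. -/
def cocycleSpace : Submodule ℝ (L →ₗ[ℝ] (L ⊗[ℝ] L)) where
  carrier := {δ | (∀ X : L, δ X ∈ skewPart L) ∧ IsCocycle L ⇑δ}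
  add_mem' := by
    rintro a b ⟨ha1, ha2⟩ ⟨hb1, hb2⟩
    refine ⟨fun X => add_mem (ha1 X) (hb1 X), fun X Y => ?_⟩
    simp only [LinearMap.add_apply, ha2 X Y, hb2 X Y, map_add]
    abel
  zero_mem' := by
    refine ⟨fun X => zero_mem _, fun X Y => ?_⟩
    simp
  smul_mem' := by
    rintro c a ⟨ha1, ha2⟩
    refine ⟨fun X => Submodule.smul_mem _ c (ha1 X), fun X Y => ?_⟩
    simp only [LinearMap.smul_apply, ha2 X Y, map_smul, smul_sub]

end

section TensorCalculus

variable {L : Type} [LieRing L] [LieAlgebra ℝ L]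

theorem act_tmul (X a b : L) :
    act L X (a ⊗ₜ[ℝ] b) = ⁅X, a⁆ ⊗ₜ[ℝ] b + a ⊗ₜ[ℝ] ⁅X, b⁆ := by
  simp [act, LieAlgebra.ad_apply]

theorem act_wedge (X a b : L) :
    act L X (wedge L a b) = wedge L ⁅X, a⁆ b + wedge L a ⁅X, b⁆ := by
  simp only [wedge, map_sub, act_tmul]
  abel

theorem act_lie (X Y : L) (t : L ⊗[ℝ] L) :
    act L ⁅X, Y⁆ t = act L X (act L Y t) - act L Y (act L X t) := by
  induction t using TensorProduct.induction_on with
  | zero => simp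
  | tmul a b =>
    simp only [act_tmul, map_add, lie_lie, sub_tmul, tmul_sub]
    abel
  | add x y hx hy =>
    simp only [map_add, hx, hy]
    abel

theorem cobdry_apply (r : L ⊗[ℝ] L) (X : L) : cobdry L r X = act L X r := rfl

theorem isCocycle_cobdry (r : L ⊗[ℝ] L) : IsCocycle L (cobdry L r) :=
  fun X Y => act_lie X Y r

theorem wedge_mem_skewPart (a b : L) : wedge L a b ∈ skewPart L :=
  Submodule.subset_span ⟨a, b, rfl⟩

theorem act_mem_skewPart (X : L) {t : L ⊗[ℝ] L} (ht : t ∈ skewPart L) :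
    act L X t ∈ skewPart L := by
  induction ht using Submodule.span_induction with
  | mem w hw =>
    obtain ⟨a, b, rfl⟩ := hw
    rw [act_wedge]
    exact add_mem (wedge_mem_skewPart _ _) (wedge_mem_skewPart _ _)
  | zero => simp
  | add x y _ _ hx hy => rw [map_add]; exact add_mem hx hy
  | smul c x _ hx => rw [map_smul]; exact Submodule.smul_mem _ _ hx

theorem wedge_smul_left (c : ℝ) (a b : L) : wedge L (c • a) b = c • wedge L a b := by
  simp only [wedge, smul_sub, ← smul_tmul', tmul_smul]

theorem wedge_smul_right (c : ℝ) (a b : L) : wedge L a (c • b) = c • wedge L a b := by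
  simp only [wedge, smul_sub, ← smul_tmul', tmul_smul]

theorem wedge_neg_left (a b : L) : wedge L (-a) b = -wedge L a b := by
  simp only [wedge, neg_tmul, tmul_neg]
  abel

theorem wedge_neg_right (a b : L) : wedge L a (-b) = -wedge L a b := by
  simp only [wedge, neg_tmul, tmul_neg]
  abel

theorem wedge_zero_left (b : L) : wedge L 0 b = 0 := by simp [wedge]

theorem wedge_zero_right (a : L) : wedge L a 0 = 0 := by simp [wedge]

theorem wedge_self (a : L) : wedge L a a = 0 := sub_self _

theorem wedge_swap (a b : L) : wedge L b a = -wedge L a b := (neg_sub _ _).symm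

theorem rTensor_wedge (f : L →ₗ[ℝ] L ⊗[ℝ] L) (a b : L) :
    LinearMap.rTensor L f (wedge L a b) = f a ⊗ₜ[ℝ] b - f b ⊗ₜ[ℝ] a := by
  simp [wedge]

variable (L) in
def cyclicSum : ((L ⊗[ℝ] L) ⊗[ℝ] L) →ₗ[ℝ] ((L ⊗[ℝ] L) ⊗[ℝ] L) :=
  LinearMap.id + zeta L + zeta L ∘ₗ zeta L

theorem cyclicSum_wedge_tmul (a b c : L) :
    cyclicSum L (wedge L a b ⊗ₜ[ℝ] c) = wedge3 L a b c := by
  simp only [cyclicSum, wedge, wedge3, sub_tmul, map_sub, LinearMap.add_apply,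
    LinearMap.id_apply, LinearMap.comp_apply, zeta, LinearEquiv.coe_coe,
    TensorProduct.comm_tmul, TensorProduct.assoc_symm_tmul]
  abel

theorem wedge3_self_right (a b : L) : wedge3 L a b b = 0 := by
  simp only [wedge3]
  abel

theorem coJacobi_of_basis {ι : Type*} (B : Module.Basis ι ℝ L) (δ : L →ₗ[ℝ] L ⊗[ℝ] L)
    (h : ∀ i, cyclicSum L (LinearMap.rTensor L δ (δ (B i))) = 0) : CoJacobi L δ := by
  have hzero : cyclicSum L ∘ₗ LinearMap.rTensor L δ ∘ₗ δ = 0 := B.ext h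
  exact fun X => LinearMap.congr_fun hzero X

theorem cyclicSum_rTensor_eq_zero {δ : L →ₗ[ℝ] L ⊗[ℝ] L} {X M : L} {c : ℝ}
    (hM : δ M = 0) (hX : δ X = c • wedge L X M) :
    cyclicSum L (LinearMap.rTensor L δ (δ X)) = 0 := by
  rw [hX, map_smul, rTensor_wedge, hM, zero_tmul, sub_zero, hX, ← smul_tmul', map_smul,
    map_smul, cyclicSum_wedge_tmul, wedge3_self_right, smul_zero, smul_zero]

theorem isBialgCocomm_cobdry {r : L ⊗[ℝ] L} (hr : r ∈ skewPart L)
    (hcj : CoJacobi L (cobdry L r)) : IsBialgCocomm L (cobdry L r) :=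
  ⟨fun X => act_mem_skewPart X hr, isCocycle_cobdry r, hcj⟩

section Coordinates

variable {ι : Type*} (B : Module.Basis ι ℝ L)

theorem repr_act_of_lie_eq_smul {X : L} {w : ι → ℝ} (hw : ∀ i, ⁅X, B i⁆ = w i • B i)
    (t : L ⊗[ℝ] L) (i j : ι) :
    (B.tensorProduct B).repr (act L X t) (i, j) =
      (w i + w j) * (B.tensorProduct B).repr t (i, j) := by
  have hmaps : Finsupp.lapply (i, j) ∘ₗ (B.tensorProduct B).repr.toLinearMap ∘ₗ act L X =
      (w i + w j) • (Finsupp.lapply (i, j) ∘ₗ (B.tensorProduct B).repr.toLinearMap) := by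
    refine (B.tensorProduct B).ext fun ⟨k, l⟩ => ?_
    simp only [LinearMap.comp_apply, LinearMap.smul_apply, LinearEquiv.coe_coe,
      Module.Basis.tensorProduct_apply, act_tmul, hw, ← smul_tmul', tmul_smul, map_add, map_smul,
      Finsupp.lapply_apply, smul_eq_mul, Module.Basis.tensorProduct_repr_tmul_apply,
      Module.Basis.repr_self]
    classical
    simp only [Finsupp.single_apply]
    split_ifs with hl hk hk
    · rw [hl, hk]; ring
    all_goals ring
  exact LinearMap.congr_fun hmaps t

theorem repr_eq_neg_repr_swap_of_mem_skewPart {t : L ⊗[ℝ] L} (ht : t ∈ skewPart L)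
    (i j : ι) :
    (B.tensorProduct B).repr t (i, j) = -(B.tensorProduct B).repr t (j, i) := by
  induction ht using Submodule.span_induction with
  | mem w hw =>
    obtain ⟨a, b, rfl⟩ := hw
    simp only [wedge, map_sub, Finsupp.sub_apply, Module.Basis.tensorProduct_repr_tmul_apply,
      smul_eq_mul]
    ring
  | zero => simp
  | add x y _ _ hx hy => simp only [map_add, Finsupp.add_apply, hx, hy]; ring
  | smul c x _ hx => simp only [map_smul, Finsupp.smul_apply, hx, smul_eq_mul]; ring

end Coordinates

end TensorCalculus

section Schrodinger

variable {L : Type} [LieRing L] [LieAlgebra ℝ L]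

structure SchrodingerRelations (D H P K C M : L) : Prop where
  lie_D_P : ⁅D, P⁆ = -P
  lie_D_K : ⁅D, K⁆ = K
  lie_K_P : ⁅K, P⁆ = M
  lie_D_H : ⁅D, H⁆ = (-2 : ℝ) • H
  lie_D_C : ⁅D, C⁆ = (2 : ℝ) • C
  lie_H_C : ⁅H, C⁆ = D
  lie_K_H : ⁅K, H⁆ = P
  lie_P_C : ⁅P, C⁆ = -K
  lie_K_C : ⁅K, C⁆ = 0
  lie_P_H : ⁅P, H⁆ = 0
  lie_M : ∀ X : L, ⁅M, X⁆ = 0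

def weightZeroTensor (D H P K C M : L) (a b c : ℝ) : L ⊗[ℝ] L :=
  a • wedge L D M + b • wedge L P K + c • wedge L H C

theorem weightZeroTensor_zero (D H P K C M : L) (a b : ℝ) :
    weightZeroTensor D H P K C M a b 0 = a • wedge L D M + b • wedge L P K := by
  rw [weightZeroTensor, zero_smul, add_zero]

/-- The eigenvalues of `ad D` on the basis `D, H, P, K, C, M`. -/
def schrodingerWeight : Fin 6 → ℤ := ![0, -2, -1, 1, 2, 0]

variable {D H P K C M : L}

theorem weightZeroTensor_mem_skewPart (a b c : ℝ) :
    weightZeroTensor D H P K C M a b c ∈ skewPart L := by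
  refine add_mem (add_mem ?_ ?_) ?_ <;> exact Submodule.smul_mem _ _ (wedge_mem_skewPart _ _)

namespace SchrodingerRelations

theorem lie_M_right (hS : SchrodingerRelations D H P K C M) (X : L) : ⁅X, M⁆ = 0 := by
  rw [← lie_skew, hS.lie_M, neg_zero]

theorem act_D (hS : SchrodingerRelations D H P K C M) (a b c : ℝ) :
    act L D (weightZeroTensor D H P K C M a b c) = 0 := by
  simp only [weightZeroTensor, map_add, map_smul, act_wedge, lie_self, hS.lie_M_right,
    hS.lie_D_P, hS.lie_D_K, hS.lie_D_H, hS.lie_D_C, wedge_zero_left, wedge_zero_right,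
    wedge_neg_left, wedge_smul_left, wedge_smul_right]
  module

theorem act_M (hS : SchrodingerRelations D H P K C M) (a b c : ℝ) :
    act L M (weightZeroTensor D H P K C M a b c) = 0 := by
  simp only [weightZeroTensor, map_add, map_smul, act_wedge, hS.lie_M, wedge_zero_left,
    wedge_zero_right, smul_zero, add_zero]

theorem act_P (hS : SchrodingerRelations D H P K C M) (a b c : ℝ) :
    act L P (weightZeroTensor D H P K C M a b c) = (a - b) • wedge L P M - c • wedge L H K := by
  simp only [weightZeroTensor, map_add, map_smul, act_wedge, ← lie_skew P D, hS.lie_D_P,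
    hS.lie_M_right, lie_self, ← lie_skew P K, hS.lie_K_P, hS.lie_P_H, hS.lie_P_C, wedge_zero_left,
    wedge_zero_right, wedge_neg_left, wedge_neg_right]
  module

theorem act_K (hS : SchrodingerRelations D H P K C M) (a b c : ℝ) :
    act L K (weightZeroTensor D H P K C M a b c) =
      -((a + b) • wedge L K M) + c • wedge L P C := by
  simp only [weightZeroTensor, map_add, map_smul, act_wedge, ← lie_skew K D, hS.lie_D_K,
    hS.lie_M_right, lie_self, hS.lie_K_P, hS.lie_K_H, hS.lie_K_C, wedge_zero_right, wedge_neg_left,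
    wedge_swap M K]
  module

theorem act_H (hS : SchrodingerRelations D H P K C M) (a b c : ℝ) :
    act L H (weightZeroTensor D H P K C M a b c) = (2 * a) • wedge L H M + c • wedge L H D := by
  simp only [weightZeroTensor, map_add, map_smul, act_wedge, ← lie_skew H D, hS.lie_D_H,
    hS.lie_M_right, lie_self, ← lie_skew H P, hS.lie_P_H, ← lie_skew H K, hS.lie_K_H,
    hS.lie_H_C, wedge_self, wedge_zero_left, wedge_zero_right, wedge_neg_left, wedge_neg_right,
    wedge_smul_left]
  module

theorem act_C (hS : SchrodingerRelations D H P K C M) (a b c : ℝ) :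
    act L C (weightZeroTensor D H P K C M a b c) =
      -((2 * a) • wedge L C M) - c • wedge L D C := by
  simp only [weightZeroTensor, map_add, map_smul, act_wedge, ← lie_skew C D, hS.lie_D_C,
    hS.lie_M_right, lie_self, ← lie_skew C P, hS.lie_P_C, ← lie_skew C K, hS.lie_K_C,
    ← lie_skew C H, hS.lie_H_C, wedge_self, wedge_zero_right, wedge_neg_left,
    wedge_neg_right, wedge_smul_left, wedge_swap C D]
  module

end SchrodingerRelations

end Schrodinger

section SchrodingerCoordinates

variable {L : Type} [LieRing L] [LieAlgebra ℝ L] {D H P K C M : L}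
  {B : Module.Basis (Fin 6) ℝ L}

theorem SchrodingerRelations.lie_D_basis (hS : SchrodingerRelations D H P K C M)
    (hB : ⇑B = ![D, H, P, K, C, M]) (i : Fin 6) :
    ⁅D, B i⁆ = (schrodingerWeight i : ℝ) • B i := by
  rw [hB]
  fin_cases i <;> simp [schrodingerWeight, hS.lie_D_H, hS.lie_D_P, hS.lie_D_K, hS.lie_D_C,
    hS.lie_M_right]

theorem SchrodingerRelations.isBialgCocomm_cobdry_weightZeroTensor
    (hS : SchrodingerRelations D H P K C M) (hB : ⇑B = ![D, H, P, K, C, M]) (a b : ℝ) :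
    IsBialgCocomm L (cobdry L (weightZeroTensor D H P K C M a b 0)) := by
  refine isBialgCocomm_cobdry (weightZeroTensor_mem_skewPart a b 0)
    (coJacobi_of_basis B _ fun i => ?_)
  have hM : cobdry L (weightZeroTensor D H P K C M a b 0) M = 0 := hS.act_M a b 0
  fin_cases i <;> simp only [hB, Fin.reduceFinMk, Matrix.cons_val, Fin.isValue]
  · simp [cobdry_apply, hS.act_D]
  · exact cyclicSum_rTensor_eq_zero (c := 2 * a) hM (by rw [cobdry_apply, hS.act_H]; module)
  · exact cyclicSum_rTensor_eq_zero (c := a - b) hM (by rw [cobdry_apply, hS.act_P]; module)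
  · exact cyclicSum_rTensor_eq_zero (c := -(a + b)) hM (by rw [cobdry_apply, hS.act_K]; module)
  · exact cyclicSum_rTensor_eq_zero (c := -(2 * a)) hM (by rw [cobdry_apply, hS.act_C]; module)
  · simp [hM]

theorem SchrodingerRelations.exists_eq_weightZeroTensor (hS : SchrodingerRelations D H P K C M)
    (hB : ⇑B = ![D, H, P, K, C, M]) {t : L ⊗[ℝ] L} (ht : t ∈ skewPart L)
    (hD : act L D t = 0) : ∃ a b c : ℝ, t = weightZeroTensor D H P K C M a b c := by
  have hzero : ∀ i j, schrodingerWeight i + schrodingerWeight j ≠ 0 →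
      (B.tensorProduct B).repr t (i, j) = 0 := by
    intro i j hij
    have h := repr_act_of_lie_eq_smul B (hS.lie_D_basis hB) t i j
    rw [hD, map_zero, Finsupp.coe_zero, Pi.zero_apply] at h
    exact (mul_eq_zero.mp h.symm).resolve_left (mod_cast hij)
  have hskew := repr_eq_neg_repr_swap_of_mem_skewPart B ht
  refine ⟨(B.tensorProduct B).repr t (0, 5), (B.tensorProduct B).repr t (2, 3),
    (B.tensorProduct B).repr t (1, 4), (B.tensorProduct B).ext_elem fun ⟨i, j⟩ => ?_⟩
  have hz := hzero i j
  have hs := hskew i j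
  obtain ⟨rfl, rfl, rfl, rfl, rfl, rfl⟩ :
      D = B 0 ∧ H = B 1 ∧ P = B 2 ∧ K = B 3 ∧ C = B 4 ∧ M = B 5 := by simp [hB]
  -- off the weight-zero pairs `hz` kills the coordinate, on them `hs` ties it to its transpose
  fin_cases i <;> fin_cases j <;> simp only [Fin.reduceFinMk, Fin.isValue] at hz hs ⊢ <;>
    simp [weightZeroTensor, wedge, schrodingerWeight] at hz hs ⊢ <;> linarith

theorem SchrodingerRelations.eq_zero_of_cyclicSum_P (hS : SchrodingerRelations D H P K C M)
    (hB : ⇑B = ![D, H, P, K, C, M]) {a b c : ℝ}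
    (h : cyclicSum L (LinearMap.rTensor L (cobdry L (weightZeroTensor D H P K C M a b c))
      (cobdry L (weightZeroTensor D H P K C M a b c) P)) = 0) : c = 0 := by
  set δ := cobdry L (weightZeroTensor D H P K C M a b c)
  have hexpand : cyclicSum L (LinearMap.rTensor L δ (δ P)) =
      -((a - b) * c) • wedge3 L H K M - (2 * a * c) • wedge3 L H M K -
        (c * c) • wedge3 L H D K - ((a + b) * c) • wedge3 L K M H +
        (c * c) • wedge3 L P C H := by
    simp only [δ, cobdry_apply, hS.act_P, hS.act_H, hS.act_K, hS.act_M, map_sub, map_add,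
      map_smul, map_neg, rTensor_wedge, sub_tmul, add_tmul, neg_tmul, zero_tmul, ← smul_tmul',
      cyclicSum_wedge_tmul, wedge3_self_right, map_zero]
    module
  -- only `wedge3 L H D K` has a nonzero `H ⊗ D ⊗ K` coordinate
  have hcoef := congrArg (fun t => ((B.tensorProduct B).tensorProduct B).repr t ((1, 0), 3))
    (hexpand.symm.trans h)
  obtain ⟨rfl, rfl, rfl, rfl, rfl, rfl⟩ :
      D = B 0 ∧ H = B 1 ∧ P = B 2 ∧ K = B 3 ∧ C = B 4 ∧ M = B 5 := by simp [hB]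
  simpa [wedge3, Finsupp.single_apply] using hcoef

end SchrodingerCoordinates

theorem statement9 (L : Type) [LieRing L] [LieAlgebra ℝ L]
    (D H P K C M : L) (B : Module.Basis (Fin 6) ℝ L)
    (hB : ⇑B = ![D, H, P, K, C, M])
    (hDP : ⁅D, P⁆ = -P) (hDK : ⁅D, K⁆ = K) (hKP : ⁅K, P⁆ = M)
    (hDH : ⁅D, H⁆ = (-2 : ℝ) • H) (hDC : ⁅D, C⁆ = (2 : ℝ) • C) (hHC : ⁅H, C⁆ = D)
    (hKH : ⁅K, H⁆ = P) (hPC : ⁅P, C⁆ = -K) (hKC : ⁅K, C⁆ = 0) (hPH : ⁅P, H⁆ = 0)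
    (hM : ∀ X : L, ⁅M, X⁆ = 0) :
    (∀ r ∈ skewPart L, IsBialgCocomm L (cobdry L r) →
      (cobdry L r D = 0 ↔ ∃ c1 c2 : ℝ, r = c1 • wedge L D M + c2 • wedge L P K)) ∧
    (∀ c1 c2 : ℝ,
      IsBialgCocomm L (cobdry L (c1 • wedge L D M + c2 • wedge L P K)) ∧
      cobdry L (c1 • wedge L D M + c2 • wedge L P K) D = 0 ∧
      cobdry L (c1 • wedge L D M + c2 • wedge L P K) M = 0 ∧
      cobdry L (c1 • wedge L D M + c2 • wedge L P K) P = (c1 - c2) • wedge L P M ∧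
      cobdry L (c1 • wedge L D M + c2 • wedge L P K) K = -((c1 + c2) • wedge L K M) ∧
      cobdry L (c1 • wedge L D M + c2 • wedge L P K) H = (2*c1) • wedge L H M ∧
      cobdry L (c1 • wedge L D M + c2 • wedge L P K) C = -((2*c1) • wedge L C M)) := by
  have hS : SchrodingerRelations D H P K C M :=
    ⟨hDP, hDK, hKP, hDH, hDC, hHC, hKH, hPC, hKC, hPH, hM⟩
  refine ⟨fun r hr hbi => ⟨fun hD => ?_, ?_⟩, fun c1 c2 => ?_⟩
  · obtain ⟨a, b, c, rfl⟩ := hS.exists_eq_weightZeroTensor hB hr hD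
    obtain rfl : c = 0 := hS.eq_zero_of_cyclicSum_P hB (hbi.2.2 P)
    exact ⟨a, b, weightZeroTensor_zero D H P K C M a b⟩
  · rintro ⟨c1, c2, rfl⟩
    rw [← weightZeroTensor_zero D H P K C M]
    exact hS.act_D c1 c2 0
  · rw [← weightZeroTensor_zero D H P K C M]
    refine ⟨hS.isBialgCocomm_cobdry_weightZeroTensor hB c1 c2, hS.act_D c1 c2 0,
      hS.act_M c1 c2 0, ?_, ?_, ?_, ?_⟩ <;>
      simp only [cobdry_apply, hS.act_P, hS.act_K, hS.act_H, hS.act_C, zero_smul, add_zero,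
        sub_zero]
end

section
/- The linear map ρ: S → M₄(ℝ) defined on the basis by the given 4×4 matrices is an injective Lie algebra homomorphism: ρ([X,Y]) = ρ(X)ρ(Y) - ρ(Y)ρ(X) for all X, Y ∈ S, and ρ is injective. -/
open TensorProduct

/-!
On a basis, bilinearity and antisymmetry reduce the homomorphism property to the fifteen
commutators of distinct basis vectors, and each of these is a direct matrix computation.
Injectivity holds because the six matrices are linearly independent: each has an entry at which
the other five vanish.
-/

attribute [local instance] LieRing.ofAssociativeRing

theorem LinearMap.map_lie_of_basis {ι R L A : Type*} [LinearOrder ι] [CommRing R] [LieRing L]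
    [LieAlgebra R L] [Ring A] [Algebra R A] (b : Module.Basis ι R L) (f : L →ₗ[R] A)
    (h : ∀ i j, i < j → f ⁅b i, b j⁆ = ⁅f (b i), f (b j)⁆) (x y : L) :
    f ⁅x, y⁆ = ⁅f x, f y⁆ := by
  have hbasis : ∀ i j, f ⁅b i, b j⁆ = ⁅f (b i), f (b j)⁆ := by
    intro i j
    rcases lt_trichotomy i j with hij | rfl | hji
    · exact h i j hij
    · simp only [lie_self, map_zero]
    · rw [← lie_skew, map_neg, h j i hji, lie_skew]
  have hext : (LieModule.toEnd R L L : L →ₗ[R] Module.End R L).compr₂ f =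
      (LieModule.toEnd R A A : A →ₗ[R] Module.End R A).compl₁₂ f f :=
    LinearMap.ext_basis b b hbasis
  exact LinearMap.congr_fun₂ hext x y

namespace Schrodinger

def matD : Matrix (Fin 4) (Fin 4) ℝ := !![0,0,0,0; 0,-1,0,0; 0,0,1,0; 0,0,0,0]
def matH : Matrix (Fin 4) (Fin 4) ℝ := !![0,0,0,0; 0,0,1,0; 0,0,0,0; 0,0,0,0]
def matP : Matrix (Fin 4) (Fin 4) ℝ := !![0,0,1,0; 0,0,0,1; 0,0,0,0; 0,0,0,0]
def matK : Matrix (Fin 4) (Fin 4) ℝ := !![0,1,0,0; 0,0,0,0; 0,0,0,-1; 0,0,0,0]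
def matC : Matrix (Fin 4) (Fin 4) ℝ := !![0,0,0,0; 0,0,0,0; 0,-1,0,0; 0,0,0,0]
def matM : Matrix (Fin 4) (Fin 4) ℝ := !![0,0,0,2; 0,0,0,0; 0,0,0,0; 0,0,0,0]

theorem linearIndependent_mat :
    LinearIndependent ℝ ![matD, matH, matP, matK, matC, matM] := by
  refine Fintype.linearIndependent_iff.2 fun g hg i => ?_
  have entry (a b : Fin 4) := congrFun (congrFun hg a) b
  simp only [Fin.sum_univ_six, Matrix.add_apply, Matrix.smul_apply, Matrix.zero_apply] at entry
  fin_cases i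
  · simpa [matD, matH, matP, matK, matC, matM] using entry 1 1
  · simpa [matD, matH, matP, matK, matC, matM] using entry 1 2
  · simpa [matD, matH, matP, matK, matC, matM] using entry 0 2
  · simpa [matD, matH, matP, matK, matC, matM] using entry 0 1
  · simpa [matD, matH, matP, matK, matC, matM] using entry 2 1
  · simpa [matD, matH, matP, matK, matC, matM] using entry 0 3

@[simp]
theorem matD_lie_matH : ⁅matD, matH⁆ = (-2 : ℝ) • matH := by
  rw [Ring.lie_def]; ext i j
  fin_cases i <;> fin_cases j <;> norm_num [matD, matH, Matrix.mul_apply, Fin.sum_univ_four]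

@[simp]
theorem matD_lie_matP : ⁅matD, matP⁆ = -matP := by
  rw [Ring.lie_def]; ext i j
  fin_cases i <;> fin_cases j <;> norm_num [matD, matP, Matrix.mul_apply, Fin.sum_univ_four]

@[simp]
theorem matD_lie_matK : ⁅matD, matK⁆ = matK := by
  rw [Ring.lie_def]; ext i j
  fin_cases i <;> fin_cases j <;> norm_num [matD, matK, Matrix.mul_apply, Fin.sum_univ_four]

@[simp]
theorem matD_lie_matC : ⁅matD, matC⁆ = (2 : ℝ) • matC := by
  rw [Ring.lie_def]; ext i j
  fin_cases i <;> fin_cases j <;> norm_num [matD, matC, Matrix.mul_apply, Fin.sum_univ_four]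

@[simp]
theorem matD_lie_matM : ⁅matD, matM⁆ = 0 := by
  rw [Ring.lie_def]; ext i j
  fin_cases i <;> fin_cases j <;> norm_num [matD, matM, Matrix.mul_apply, Fin.sum_univ_four]

@[simp]
theorem matH_lie_matP : ⁅matH, matP⁆ = 0 := by
  rw [Ring.lie_def]; ext i j
  fin_cases i <;> fin_cases j <;> norm_num [matH, matP, Matrix.mul_apply, Fin.sum_univ_four]

@[simp]
theorem matH_lie_matK : ⁅matH, matK⁆ = -matP := by
  rw [Ring.lie_def]; ext i j
  fin_cases i <;> fin_cases j <;> norm_num [matH, matK, matP, Matrix.mul_apply, Fin.sum_univ_four]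

@[simp]
theorem matH_lie_matC : ⁅matH, matC⁆ = matD := by
  rw [Ring.lie_def]; ext i j
  fin_cases i <;> fin_cases j <;> norm_num [matH, matC, matD, Matrix.mul_apply, Fin.sum_univ_four]

@[simp]
theorem matH_lie_matM : ⁅matH, matM⁆ = 0 := by
  rw [Ring.lie_def]; ext i j
  fin_cases i <;> fin_cases j <;> norm_num [matH, matM, Matrix.mul_apply, Fin.sum_univ_four]

@[simp]
theorem matP_lie_matK : ⁅matP, matK⁆ = -matM := by
  rw [Ring.lie_def]; ext i j
  fin_cases i <;> fin_cases j <;> norm_num [matP, matK, matM, Matrix.mul_apply, Fin.sum_univ_four]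

@[simp]
theorem matP_lie_matC : ⁅matP, matC⁆ = -matK := by
  rw [Ring.lie_def]; ext i j
  fin_cases i <;> fin_cases j <;> norm_num [matP, matC, matK, Matrix.mul_apply, Fin.sum_univ_four]

@[simp]
theorem matP_lie_matM : ⁅matP, matM⁆ = 0 := by
  rw [Ring.lie_def]; ext i j
  fin_cases i <;> fin_cases j <;> norm_num [matP, matM, Matrix.mul_apply, Fin.sum_univ_four]

@[simp]
theorem matK_lie_matC : ⁅matK, matC⁆ = 0 := by
  rw [Ring.lie_def]; ext i j
  fin_cases i <;> fin_cases j <;> norm_num [matK, matC, Matrix.mul_apply, Fin.sum_univ_four]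

@[simp]
theorem matK_lie_matM : ⁅matK, matM⁆ = 0 := by
  rw [Ring.lie_def]; ext i j
  fin_cases i <;> fin_cases j <;> norm_num [matK, matM, Matrix.mul_apply, Fin.sum_univ_four]

@[simp]
theorem matC_lie_matM : ⁅matC, matM⁆ = 0 := by
  rw [Ring.lie_def]; ext i j
  fin_cases i <;> fin_cases j <;> norm_num [matC, matM, Matrix.mul_apply, Fin.sum_univ_four]

end Schrodinger

theorem statement18 (L : Type) [LieRing L] [LieAlgebra ℝ L]
    (D H P K C M : L) (B : Module.Basis (Fin 6) ℝ L)
    (hB : ⇑B = ![D, H, P, K, C, M])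
    (hDP : ⁅D, P⁆ = -P) (hDK : ⁅D, K⁆ = K) (hKP : ⁅K, P⁆ = M)
    (hDH : ⁅D, H⁆ = (-2 : ℝ) • H) (hDC : ⁅D, C⁆ = (2 : ℝ) • C) (hHC : ⁅H, C⁆ = D)
    (hKH : ⁅K, H⁆ = P) (hPC : ⁅P, C⁆ = -K) (hKC : ⁅K, C⁆ = 0) (hPH : ⁅P, H⁆ = 0)
    (hM : ∀ X : L, ⁅M, X⁆ = 0)
    (rho : L →ₗ[ℝ] Matrix (Fin 4) (Fin 4) ℝ)
    (hrD : rho D = !![0,0,0,0; 0,-1,0,0; 0,0,1,0; 0,0,0,0])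
    (hrH : rho H = !![0,0,0,0; 0,0,1,0; 0,0,0,0; 0,0,0,0])
    (hrP : rho P = !![0,0,1,0; 0,0,0,1; 0,0,0,0; 0,0,0,0])
    (hrK : rho K = !![0,1,0,0; 0,0,0,0; 0,0,0,-1; 0,0,0,0])
    (hrC : rho C = !![0,0,0,0; 0,0,0,0; 0,-1,0,0; 0,0,0,0])
    (hrM : rho M = !![0,0,0,2; 0,0,0,0; 0,0,0,0; 0,0,0,0]) :
    (∀ X Y : L, rho ⁅X, Y⁆ = rho X * rho Y - rho Y * rho X) ∧ Function.Injective rho := by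
  have hD : rho D = Schrodinger.matD := hrD
  have hH : rho H = Schrodinger.matH := hrH
  have hP : rho P = Schrodinger.matP := hrP
  have hK : rho K = Schrodinger.matK := hrK
  have hC : rho C = Schrodinger.matC := hrC
  have hM' : rho M = Schrodinger.matM := hrM
  have hHP : ⁅H, P⁆ = 0 := by rw [← lie_skew, hPH, neg_zero]
  have hHK : ⁅H, K⁆ = -P := by rw [← lie_skew, hKH]
  have hPK : ⁅P, K⁆ = -M := by rw [← lie_skew, hKP]
  have hXM (X : L) : ⁅X, M⁆ = 0 := by rw [← lie_skew, hM, neg_zero]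
  have hbasis : ∀ i j, i < j → rho ⁅B i, B j⁆ = ⁅rho (B i), rho (B j)⁆ := by
    intro i j hij
    rw [hB]
    fin_cases i <;> fin_cases j <;> first
      | exact absurd hij (by decide)
      | simp [hDH, hDP, hDK, hDC, hXM, hHP, hHK, hHC, hPK, hPC, hKC, hD, hH, hP, hK, hC, hM']
  refine ⟨fun X Y => ?_, LinearMap.injective_of_linearIndependent B.span_eq ?_⟩
  · rw [LinearMap.map_lie_of_basis B rho hbasis, Ring.lie_def]
  · have hρB : rho ∘ B = ![Schrodinger.matD, Schrodinger.matH, Schrodinger.matP,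
        Schrodinger.matK, Schrodinger.matC, Schrodinger.matM] := by
      rw [hB]; ext1 i; fin_cases i <;> assumption
    rw [hρB]; exact Schrodinger.linearIndependent_mat
end
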